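/- Suppose the price functions are affine P_j(d) = α_j − β_j d with β_j > 0, Assumption A2 holds, and each C_i is convex. Then Φ(f, q) = w(f, q) − (1/2) Σ_j β_j (Hᵀq²)_j is an exact potential for the networked Cournot game with market maker: unilateral deviations by any producer or by the market maker change the deviator's utility by exactly the change in Φ. -/
import Mathlib


open Finset intervalIntegral

/-- Total consumption at market `j`: `(Bf + Hᵀq)_j`. -/
noncomputable def demand {n m l : ℕ} (B : Fin m → Fin l → ℝ) (H : Fin n → Fin m → ℝ)
    (f : Fin l → ℝ) (q : Fin n → ℝ) (j : Fin m) : ℝ :=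
  (∑ k, B j k * f k) + ∑ i, H i j * q i

/-- Producer `i`'s utility. -/
noncomputable def producerU {n m l : ℕ} (B : Fin m → Fin l → ℝ) (H : Fin n → Fin m → ℝ)
    (P : Fin m → ℝ → ℝ) (C : Fin n → ℝ → ℝ) (i : Fin n)
    (f : Fin l → ℝ) (q : Fin n → ℝ) : ℝ :=
  q i * (∑ j, H i j * P j (demand B H f q j)) - C i (q i)

/-- Market maker's (Marshallian welfare) utility. -/
noncomputable def makerW {n m l : ℕ} (B : Fin m → Fin l → ℝ) (H : Fin n → Fin m → ℝ)
    (P : Fin m → ℝ → ℝ) (C : Fin n → ℝ → ℝ)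
    (f : Fin l → ℝ) (q : Fin n → ℝ) : ℝ :=
  (∑ j, ∫ s in (0 : ℝ)..(demand B H f q j), P j s) - ∑ i, C i (q i)

/-- The candidate potential `Φ(f,q) = w(f,q) − (1/2) Σ_j β j (Hᵀ q²)_j`. -/
noncomputable def potentialΦ {n m l : ℕ} (B : Fin m → Fin l → ℝ) (H : Fin n → Fin m → ℝ)
    (P : Fin m → ℝ → ℝ) (C : Fin n → ℝ → ℝ) (β : Fin m → ℝ)
    (f : Fin l → ℝ) (q : Fin n → ℝ) : ℝ :=
  makerW B H P C f q - (1 / 2) * ∑ j, β j * ∑ i, H i j * q i ^ 2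

private lemma int_affine (a b d : ℝ) :
    (∫ s in (0:ℝ)..d, (a - b * s)) = a * d - b / 2 * d ^ 2 := by
  rw [integral_sub intervalIntegrable_const
    ((intervalIntegrable_id).const_mul b),
    integral_const_mul, integral_id]
  simp
  ring

private lemma sum_update_comp {n : ℕ} (H : Fin n → ℝ) (q : Fin n → ℝ) (i : Fin n) (x : ℝ)
    (g : ℝ → ℝ) :
    ∑ i', H i' * g (Function.update q i x i')
      = (∑ i', H i' * g (q i')) + H i * (g x - g (q i)) := by
  have h : ∀ i', H i' * g (Function.update q i x i')
      = H i' * g (q i') + (if i' = i then H i * (g x - g (q i)) else 0) := by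
    intro i'
    by_cases h : i' = i
    · subst h; simp [Function.update_self]; ring
    · simp [Function.update_of_ne h, h]
  rw [Finset.sum_congr rfl (fun i' _ => h i'), Finset.sum_add_distrib,
    Finset.sum_ite_eq' Finset.univ i]
  simp

private lemma sum_update_C {n : ℕ} (C : Fin n → ℝ → ℝ) (q : Fin n → ℝ) (i : Fin n) (x : ℝ) :
    ∑ i', C i' (Function.update q i x i')
      = (∑ i', C i' (q i')) + (C i x - C i (q i)) := by
  have h : ∀ i', C i' (Function.update q i x i')
      = C i' (q i') + (if i' = i then C i x - C i (q i) else 0) := by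
    intro i'
    by_cases h : i' = i
    · subst h; simp [Function.update_self]
    · simp [Function.update_of_ne h, h]
  rw [Finset.sum_congr rfl (fun i' _ => h i'), Finset.sum_add_distrib,
    Finset.sum_ite_eq' Finset.univ i]
  simp

/-- With affine prices `P j d = α j − β j d` (`β j > 0`), A2, and convex costs,
`Φ` is an exact potential for the networked Cournot game with market maker: unilateral
deviations by any producer or by the market maker change the deviator's utility by exactly the
change in `Φ`. -/
theorem stmt6 {n m l : ℕ}
    (B : Fin m → Fin l → ℝ) (H : Fin n → Fin m → ℝ) (c : Fin l → ℝ)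
    (α β : Fin m → ℝ) (hβ : ∀ j, 0 < β j)
    (C : Fin n → ℝ → ℝ) (hC : ∀ i, ConvexOn ℝ Set.univ (C i))
    -- Assumption A2: each row of H has exactly one entry equal to 1, the rest 0
    (hH01 : ∀ i j, H i j = 0 ∨ H i j = 1)
    (hH1 : ∀ i, ∑ j, H i j = 1)
    (P : Fin m → ℝ → ℝ) (hP : ∀ j d, P j d = α j - β j * d) :
    -- producers' deviations
    (∀ (i : Fin n) (q : Fin n → ℝ), (∀ i', 0 ≤ q i') → ∀ x : ℝ, 0 ≤ x →
      ∀ f : Fin l → ℝ, (∀ k, |f k| ≤ c k) →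
        potentialΦ B H P C β f (Function.update q i x) - potentialΦ B H P C β f q
          = producerU B H P C i f (Function.update q i x) - producerU B H P C i f q)
    ∧
    -- market maker's deviations
    (∀ (q : Fin n → ℝ), (∀ i', 0 ≤ q i') →
      ∀ f f' : Fin l → ℝ, (∀ k, |f k| ≤ c k) → (∀ k, |f' k| ≤ c k) →
        potentialΦ B H P C β f' q - potentialΦ B H P C β f q
          = makerW B H P C f' q - makerW B H P C f q) := by
  constructor
  · intro i q hq x hx f hf
    have hd : ∀ j, demand B H f (Function.update q i x) j
        = demand B H f q j + H i j * (x - q i) := by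
      intro j
      have h := sum_update_comp (fun i' => H i' j) q i x (fun t => t)
      simp only [demand]
      linarith [h]
    simp only [potentialΦ, makerW, producerU, hP, int_affine, hd]
    rw [sum_update_C C q i x]
    have hq2 : ∀ j, ∑ i', H i' j * (Function.update q i x i') ^ 2
        = (∑ i', H i' j * q i' ^ 2) + H i j * (x ^ 2 - q i ^ 2) := by
      intro j
      exact sum_update_comp (fun i' => H i' j) q i x (fun t => t ^ 2)
    simp only [hq2, Function.update_self]
    have key : ∀ j ∈ Finset.univ (α := Fin m),
        (α j * (demand B H f q j + H i j * (x - q i))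
          - β j / 2 * (demand B H f q j + H i j * (x - q i)) ^ 2)
        - (α j * demand B H f q j - β j / 2 * demand B H f q j ^ 2)
        - (1 / 2) * (β j * (H i j * (x ^ 2 - q i ^ 2)))
        = x * (H i j * (α j - β j * (demand B H f q j + H i j * (x - q i))))
          - q i * (H i j * (α j - β j * demand B H f q j)) := by
      intro j _
      rcases hH01 i j with h | h <;> rw [h] <;> ring
    have hs := Finset.sum_congr rfl key
    rw [Finset.sum_sub_distrib, Finset.sum_sub_distrib, ← Finset.mul_sum] at hs
    have h1 : ∑ j, β j * ((∑ i', H i' j * q i' ^ 2) + H i j * (x ^ 2 - q i ^ 2))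
        = (∑ j, β j * ∑ i', H i' j * q i' ^ 2)
          + ∑ j, β j * (H i j * (x ^ 2 - q i ^ 2)) := by
      rw [← Finset.sum_add_distrib]; exact Finset.sum_congr rfl fun j _ => by ring
    have h2 : ∑ j, (x * (H i j * (α j - β j * (demand B H f q j + H i j * (x - q i))))
          - q i * (H i j * (α j - β j * demand B H f q j)))
        = x * (∑ j, H i j * (α j - β j * (demand B H f q j + H i j * (x - q i))))
          - q i * ∑ j, H i j * (α j - β j * demand B H f q j) := by
      rw [Finset.sum_sub_distrib, Finset.mul_sum, Finset.mul_sum]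
    linarith [hs, h1, h2]
  · intro q hq f f' hf hf'
    simp only [potentialΦ]
    ring
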